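/- DAgger-style per-task bound: suppose for a task with expert policy π* and learned policy π, the cost-to-go gap satisfies Q_{H-t+1}(s, π, π*) - Q_{H-t+1}(s, π*, π*) ≤ δ · ℓ(s, π, π*) for all t ∈ {1,...,H} and all states s, where ℓ(s, π, π*) = P_{a~π(s), a*~π*(s)}[a ≠ a*] is the expected 0-1 loss at s. If additionally ℓ(s, π, π*) ≤ sqrt(ε) for all s reachable under π, then J(π) ≤ J(π*) + δ·H·sqrt(ε). -/
import Mathlib


/-- Expected cumulative cost over `k` steps starting from state `s`, where at
the `n`-th remaining decision the (time-indexed) policy `pol n` is used: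
`val c q pol k s` executes `pol 0` at `s`, then `pol 1`, etc. -/
noncomputable def val {S A : Type*} [Fintype S] [Fintype A]
    (c : S → A → ℝ) (q : S → A → S → ℝ) (pol : ℕ → S → A → ℝ) : ℕ → S → ℝ
  | 0, _ => 0
  | (k + 1), s =>
      ∑ a, pol 0 s a * (c s a + ∑ s', q s a s' * val c q (fun n => pol (n + 1)) k s')

/-- `Jmix c q q1 π π' H t` : expected cumulative cost over horizon `H`, executing
`π` for the first `t` steps and `π'` thereafter, from initial distribution `q1`. -/
noncomputable def Jmix {S A : Type*} [Fintype S] [Fintype A]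
    (c : S → A → ℝ) (q : S → A → S → ℝ) (q1 : S → ℝ)
    (π π' : S → A → ℝ) (H t : ℕ) : ℝ :=
  ∑ s, q1 s * val c q (fun n s' => if n < t then π s' else π' s') H s

/-- `Jcost c q q1 π H` : expected cumulative cost of policy `π` over horizon `H`. -/
noncomputable def Jcost {S A : Type*} [Fintype S] [Fintype A]
    (c : S → A → ℝ) (q : S → A → S → ℝ) (q1 : S → ℝ)
    (π : S → A → ℝ) (H : ℕ) : ℝ :=
  ∑ s, q1 s * val c q (fun _ => π) H s

/-- `dstep q1 q π t` : the distribution of the state at time `t+1` (after `t`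
steps) when following policy `π` from initial distribution `q1`. -/
noncomputable def dstep {S A : Type*} [Fintype S] [Fintype A]
    (q1 : S → ℝ) (q : S → A → S → ℝ) (π : S → A → ℝ) : ℕ → S → ℝ
  | 0 => q1
  | (t + 1) => fun s' => ∑ s, dstep q1 q π t s * ∑ a, π s a * q s a s'

/-- `Qk c q π₁ π₂ k s` : expected cost-to-go over `k` remaining steps when
executing `π₁` for one step at `s` and `π₂` thereafter. -/
noncomputable def Qk {S A : Type*} [Fintype S] [Fintype A]
    (c : S → A → ℝ) (q : S → A → S → ℝ) (π₁ π₂ : S → A → ℝ) (k : ℕ) (s : S) : ℝ :=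
  ∑ a, π₁ s a * (c s a + ∑ s', q s a s' * val c q (fun _ => π₂) (k - 1) s')

/-- `zeroOneLoss π πstar s` : probability that independent actions sampled from
`π(·|s)` and `πstar(·|s)` differ. -/
noncomputable def zeroOneLoss {S A : Type*} [Fintype A]
    (π πstar : S → A → ℝ) (s : S) : ℝ :=
  1 - ∑ a, π s a * πstar s a


section Aux
variable {S A : Type*} [Fintype S] [Fintype A]

lemma val_congr (c : S → A → ℝ) (q : S → A → S → ℝ) :
    ∀ (k : ℕ) (pol pol' : ℕ → S → A → ℝ),
      (∀ n < k, pol n = pol' n) → val c q pol k = val c q pol' k := by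
  intro k
  induction k with
  | zero => intro pol pol' _; rfl
  | succ k ih =>
    intro pol pol' h
    funext s
    simp only [val]
    rw [ih (fun n => pol (n + 1)) (fun n => pol' (n + 1))
        (fun n hn => h (n + 1) (by omega)), h 0 (by omega)]

lemma dstep_nonneg (q1 : S → ℝ) (q : S → A → S → ℝ) (π : S → A → ℝ)
    (hq10 : ∀ s, 0 ≤ q1 s) (hq0 : ∀ s a s', 0 ≤ q s a s')
    (hπ0 : ∀ s a, 0 ≤ π s a) : ∀ t s, 0 ≤ dstep q1 q π t s := by
  intro t
  induction t with
  | zero => exact hq10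
  | succ t ih =>
    intro s'
    exact Finset.sum_nonneg fun s _ => mul_nonneg (ih s)
      (Finset.sum_nonneg fun a _ => mul_nonneg (hπ0 s a) (hq0 s a s'))

lemma dstep_sum_one (q1 : S → ℝ) (q : S → A → S → ℝ) (π : S → A → ℝ)
    (hq11 : ∑ s, q1 s = 1) (hq1 : ∀ s a, ∑ s', q s a s' = 1)
    (hπ1 : ∀ s, ∑ a, π s a = 1) : ∀ t, ∑ s, dstep q1 q π t s = 1 := by
  intro t
  induction t with
  | zero => exact hq11
  | succ t ih =>
    show ∑ s', ∑ s, dstep q1 q π t s * ∑ a, π s a * q s a s' = 1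
    rw [Finset.sum_comm]
    calc ∑ s, ∑ s', dstep q1 q π t s * ∑ a, π s a * q s a s'
        = ∑ s, dstep q1 q π t s * ∑ s', ∑ a, π s a * q s a s' := by
          simp [Finset.mul_sum]
      _ = 1 := by
          have : ∀ s : S, ∑ s', ∑ a, π s a * q s a s' = 1 := by
            intro s
            rw [Finset.sum_comm]
            simp [← Finset.mul_sum, hq1, hπ1]
          simp only [this, mul_one]; exact ih

lemma dstep_comp (q1 : S → ℝ) (q : S → A → S → ℝ) (π : S → A → ℝ) :
    ∀ t, dstep (dstep q1 q π 1) q π t = dstep q1 q π (t + 1) := by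
  intro t
  induction t with
  | zero => rfl
  | succ t ih =>
    funext s'
    show ∑ s, dstep (dstep q1 q π 1) q π t s * _ = ∑ s, dstep q1 q π (t+1) s * _
    rw [ih]

end Aux

section Key
variable {S A : Type*} [Fintype S] [Fintype A]

/-- Algebraic rearrangement for one Bellman step. -/
lemma bellman_sub (q1 : S → ℝ) (c : S → A → ℝ) (q : S → A → S → ℝ)
    (p : S → A → ℝ) (f g : S → ℝ) :
    (∑ s, q1 s * ∑ a, p s a * (c s a + ∑ s', q s a s' * f s')) -
    (∑ s, q1 s * ∑ a, p s a * (c s a + ∑ s', q s a s' * g s')) =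
    ∑ s', (∑ s, q1 s * ∑ a, p s a * q s a s') * (f s' - g s') := by
  rw [← Finset.sum_sub_distrib]
  have h1 : ∀ s : S,
      q1 s * ∑ a, p s a * (c s a + ∑ s', q s a s' * f s') -
      q1 s * ∑ a, p s a * (c s a + ∑ s', q s a s' * g s') =
      ∑ s', ∑ a, q1 s * (p s a * (q s a s' * (f s' - g s'))) := by
    intro s
    rw [← mul_sub, ← Finset.sum_sub_distrib]
    rw [Finset.mul_sum, Finset.sum_comm]
    congr 1; funext a
    rw [← mul_sub, add_sub_add_left_eq_sub, ← Finset.sum_sub_distrib]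
    simp only [← mul_sub, Finset.mul_sum]
  simp only [h1]
  rw [Finset.sum_comm]
  congr 1; funext s'
  simp only [Finset.sum_mul, Finset.mul_sum]
  congr 1; funext s; congr 1; funext a; ring

lemma step_diff (c : S → A → ℝ) (q : S → A → S → ℝ) (π πstar : S → A → ℝ) :
    ∀ (t H : ℕ), t < H → ∀ (q1 : S → ℝ),
      Jmix c q q1 π πstar H (t + 1) - Jmix c q q1 π πstar H t =
      ∑ s, dstep q1 q π t s *
        (Qk c q π πstar (H - t) s - Qk c q πstar πstar (H - t) s) := by
  intro t
  induction t with
  | zero =>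
    intro H hH q1
    obtain ⟨m, rfl⟩ : ∃ m, H = m + 1 := ⟨H - 1, by omega⟩
    unfold Jmix
    have e1 : val c q (fun n s' => if n < 1 then π s' else πstar s') (m + 1) =
        fun s => Qk c q π πstar (m + 1) s := by
      funext s
      simp only [val, Qk, Nat.add_sub_cancel]
      have : val c q (fun n s' => if n + 1 < 1 then π s' else πstar s') m =
          val c q (fun _ => πstar) m :=
        val_congr c q m _ _ (fun n _ => by simp)
      simp [this]
    have e2 : val c q (fun n s' => if n < 0 then π s' else πstar s') (m + 1) =
        fun s => Qk c q πstar πstar (m + 1) s := by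
      funext s
      have h0 : val c q (fun n s' => if n < 0 then π s' else πstar s') (m + 1) =
          val c q (fun _ => πstar) (m + 1) :=
        val_congr c q (m + 1) _ _ (fun n _ => by simp)
      rw [h0]
      simp only [val, Qk, Nat.add_sub_cancel]
    rw [e1, e2]
    simp [dstep, ← Finset.sum_sub_distrib, mul_sub]
  | succ t ih =>
    intro H hH q1
    obtain ⟨m, rfl⟩ : ∃ m, H = m + 1 := ⟨H - 1, by omega⟩
    have htm : t < m := by omega
    have key : Jmix c q q1 π πstar (m + 1) (t + 2) - Jmix c q q1 π πstar (m + 1) (t + 1) =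
        Jmix c q (dstep q1 q π 1) π πstar m (t + 1) - Jmix c q (dstep q1 q π 1) π πstar m t := by
      unfold Jmix
      have u1 : val c q (fun n s' => if n < t + 2 then π s' else πstar s') (m + 1) =
          fun s => ∑ a, π s a * (c s a + ∑ s',
            q s a s' * val c q (fun n s' => if n < t + 1 then π s' else πstar s') m s') := by
        funext s
        simp only [val]
        have : val c q (fun n s' => if n + 1 < t + 2 then π s' else πstar s') m =
            val c q (fun n s' => if n < t + 1 then π s' else πstar s') m :=
          val_congr c q m _ _ (fun n _ => by simp [Nat.add_lt_add_iff_right])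
        simp [this]
      have u2 : val c q (fun n s' => if n < t + 1 then π s' else πstar s') (m + 1) =
          fun s => ∑ a, π s a * (c s a + ∑ s',
            q s a s' * val c q (fun n s' => if n < t then π s' else πstar s') m s') := by
        funext s
        simp only [val]
        have : val c q (fun n s' => if n + 1 < t + 1 then π s' else πstar s') m =
            val c q (fun n s' => if n < t then π s' else πstar s') m :=
          val_congr c q m _ _ (fun n _ => by simp [Nat.add_lt_add_iff_right])
        simp [this]
      rw [u1, u2, bellman_sub]
      rw [← Finset.sum_sub_distrib]
      congr 1; funext s'
      rw [show dstep q1 q π 1 s' = ∑ s, q1 s * ∑ a, π s a * q s a s' from by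
        simp [dstep, Finset.mul_sum]]
      ring
    rw [key, ih m htm (dstep q1 q π 1)]
    have : (m : ℕ) - t = m + 1 - (t + 1) := by omega
    rw [← this]
    congr 1; funext s
    rw [dstep_comp]

end Key
/-- DAgger-style per-task bound: if the cost-to-go gap is bounded by
`δ · ℓ(s, π, π*)` everywhere, and the 0-1 loss is at most `√ε` at all states
reachable under `π`, then `J(π) ≤ J(π*) + δ·H·√ε`. -/
theorem dagger_per_task_bound {S A : Type*} [Fintype S] [Fintype A]
    (c : S → A → ℝ) (q : S → A → S → ℝ) (q1 : S → ℝ)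
    (π πstar : S → A → ℝ) (H : ℕ) (δ ε : ℝ)
    (hq10 : ∀ s, 0 ≤ q1 s) (hq11 : ∑ s, q1 s = 1)
    (hq0 : ∀ s a s', 0 ≤ q s a s') (hq1 : ∀ s a, ∑ s', q s a s' = 1)
    (hπ0 : ∀ s a, 0 ≤ π s a) (hπ1 : ∀ s, ∑ a, π s a = 1)
    (hπs0 : ∀ s a, 0 ≤ πstar s a) (hπs1 : ∀ s, ∑ a, πstar s a = 1)
    (hc : ∀ s a, 0 ≤ c s a ∧ c s a ≤ 1)
    (hδ : 0 ≤ δ) (hε : 0 ≤ ε)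
    (hQ : ∀ t, 1 ≤ t → t ≤ H → ∀ s,
      Qk c q π πstar (H - t + 1) s - Qk c q πstar πstar (H - t + 1) s ≤
        δ * zeroOneLoss π πstar s)
    (hreach : ∀ s, (∃ t < H, 0 < dstep q1 q π t s) →
      zeroOneLoss π πstar s ≤ Real.sqrt ε) :
    Jcost c q q1 π H ≤ Jcost c q q1 πstar H + δ * H * Real.sqrt ε := by
  have hε' : 0 ≤ Real.sqrt ε := Real.sqrt_nonneg ε
  have hJπ : Jcost c q q1 π H = Jmix c q q1 π πstar H H := by
    unfold Jcost Jmix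
    rw [val_congr c q H (fun n s' => if n < H then π s' else πstar s') (fun _ => π)
        (fun n hn => by funext s'; simp [hn])]
  have hJs : Jcost c q q1 πstar H = Jmix c q q1 π πstar H 0 := by
    unfold Jcost Jmix
    rw [val_congr c q H (fun n s' => if n < 0 then π s' else πstar s') (fun _ => πstar)
        (fun n hn => by funext s'; simp)]
  have hterm : ∀ t < H,
      Jmix c q q1 π πstar H (t + 1) - Jmix c q q1 π πstar H t ≤ δ * Real.sqrt ε := by
    intro t ht
    rw [step_diff c q π πstar t H ht q1]
    calc ∑ s, dstep q1 q π t s *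
          (Qk c q π πstar (H - t) s - Qk c q πstar πstar (H - t) s)
        ≤ ∑ s : S, dstep q1 q π t s * (δ * Real.sqrt ε) := by
          apply Finset.sum_le_sum
          intro s _
          rcases eq_or_lt_of_le (dstep_nonneg q1 q π hq10 hq0 hπ0 t s) with hd | hd
          · rw [← hd]; simp
          · apply mul_le_mul_of_nonneg_left _ hd.le
            have hQs := hQ (t + 1) (by omega) (by omega) s
            rw [show H - (t + 1) + 1 = H - t from by omega] at hQs
            refine hQs.trans ?_
            exact mul_le_mul_of_nonneg_left (hreach s ⟨t, ht, hd⟩) hδ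
      _ = δ * Real.sqrt ε := by
          rw [← Finset.sum_mul, dstep_sum_one q1 q π hq11 hq1 hπ1 t, one_mul]
  have tele : Jcost c q q1 π H - Jcost c q q1 πstar H =
      ∑ t ∈ Finset.range H,
        (Jmix c q q1 π πstar H (t + 1) - Jmix c q q1 π πstar H t) := by
    rw [hJπ, hJs, Finset.sum_range_sub (fun t => Jmix c q q1 π πstar H t) H]
  have hsum : ∑ t ∈ Finset.range H,
      (Jmix c q q1 π πstar H (t + 1) - Jmix c q q1 π πstar H t) ≤
      (H : ℝ) * (δ * Real.sqrt ε) := by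
    calc _ ≤ ∑ _t ∈ Finset.range H, δ * Real.sqrt ε :=
          Finset.sum_le_sum fun t ht => hterm t (Finset.mem_range.mp ht)
      _ = (H : ℝ) * (δ * Real.sqrt ε) := by
          simp [Finset.sum_const, nsmul_eq_mul]
  have : (H : ℝ) * (δ * Real.sqrt ε) = δ * H * Real.sqrt ε := by ring
  linarith
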